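/- arXiv:1810.03223 — 2 statements merged into one kernel-verified Lean document; each statement's English description precedes it below -/
import Mathlib

section
/- For the induced digits β_n = χ ∘ τ_B^{n-1} of the doubling map and t_n = n·(log n)^{3/4}, Lebesgue-almost surely only finitely many n satisfy #{i ≤ n : β_i ≥ t_n} ≥ 2. -/
open MeasureTheory Set

/-- The doubling map `τ(x) = 2x mod 1`. -/
noncomputable def tau (x : ℝ) : ℝ := Int.fract (2 * x)

/-- The first exit time to `B = [1/2,1)`, plus one. -/
noncomputable def phi (x : ℝ) : ℕ := sInf {n : ℕ | tau^[n] x ∈ Set.Ico (1 / 2 : ℝ) 1} + 1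

/-- The jump transformation `τ_B(x) = τ^{φ(x)}(x)`. -/
noncomputable def tauB (x : ℝ) : ℝ := tau^[phi x] x

/-!
On `[2^{-(a+1)}, 2^{-a})` the jump transformation is the affine bijection `x ↦ 2^{a+1} x - 1`
onto `[0,1)`. Summing over these blocks, `τ_B` does not increase Lebesgue (outer) measure on
`[0,1)`, and the part of `τ_B⁻¹ E` inside `(0, 2^{-n}]` has measure at most `2^{-n} |E|`. A digit
`β ≥ T` forces the point into `(0, 1/T]`, so two given digits both exceed `T` on a set of measure
`O(T^{-2})`. For `n ∈ [2^{k+1}, 2^{k+2})` there are fewer than `4^{k+2}` pairs of indices and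
`t_n ≥ t_{2^{k+1}} = 2^{k+1} ((k+1) log 2)^{3/4}`, so the dyadic block events have measure
`O(k^{-3/2})`; Borel–Cantelli concludes. Only outer measure is used, so the measurability of `τ_B`
never enters.
-/

open Filter
open scoped ENNReal

lemma fract_two_mul_fract (y : ℝ) : Int.fract (2 * Int.fract y) = Int.fract (2 * y) := by
  have h : 2 * Int.fract y = 2 * y - ((2 * ⌊y⌋ : ℤ) : ℝ) := by
    rw [Int.fract]; push_cast; ring
  rw [h, Int.fract_sub_intCast]

lemma tau_iterate_succ (n : ℕ) (x : ℝ) : tau^[n + 1] x = Int.fract (2 ^ (n + 1) * x) := by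
  induction n with
  | zero => simp [tau]
  | succ n ih =>
    rw [Function.iterate_succ_apply', ih, tau, fract_two_mul_fract, ← mul_assoc, ← pow_succ']

lemma tau_iterate_of_mem_Ico {x : ℝ} (hx : x ∈ Ico 0 1) :
    ∀ n : ℕ, tau^[n] x = Int.fract (2 ^ n * x)
  | 0 => by simp [Int.fract_eq_self.mpr hx]
  | n + 1 => tau_iterate_succ n x

lemma tauB_mem_Ico (x : ℝ) : tauB x ∈ Ico 0 1 := by
  rw [tauB, phi, tau_iterate_succ]
  exact ⟨Int.fract_nonneg _, Int.fract_lt_one _⟩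

lemma tauB_eq_of_two_pow_mul_mem_Ico {a : ℕ} {x : ℝ} (hx : 2 ^ (a + 1) * x ∈ Ico 1 2) :
    tauB x = 2 ^ (a + 1) * x - 1 := by
  obtain ⟨h1, h2⟩ := hx
  have hx0 : 0 < x := pos_of_mul_pos_right (one_pos.trans_le h1) (by positivity)
  rw [pow_succ] at h1 h2
  have hsmall : ∀ m ≤ a, tau^[m] x = 2 ^ m * x := by
    intro m hm
    have hma : 2 ^ m * x ≤ 2 ^ a * x :=
      mul_le_mul_of_nonneg_right (pow_le_pow_right₀ one_le_two hm) hx0.le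
    have hx1 : x < 1 := by nlinarith [one_le_pow₀ (M₀ := ℝ) one_le_two (n := a)]
    rw [tau_iterate_of_mem_Ico ⟨hx0.le, hx1⟩, Int.fract_eq_self]
    constructor <;> nlinarith [pow_pos (two_pos (α := ℝ)) m]
  have hphi : phi x = a + 1 := by
    rw [phi, IsLeast.csInf_eq ⟨?_, fun m hm => ?_⟩]
    · show tau^[a] x ∈ Ico (1 / 2) 1
      rw [hsmall a le_rfl]
      constructor <;> linarith
    · by_contra! hma
      have hm' : tau^[m] x ∈ Ico (1 / 2) 1 := hm
      have hpow : (2 : ℝ) ^ m * 2 ≤ 2 ^ a := by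
        rw [← pow_succ]; exact pow_le_pow_right₀ one_le_two hma
      rw [hsmall m hma.le] at hm'
      nlinarith [hm'.1]
  rw [tauB, hphi, tau_iterate_succ, Int.fract_eq_iff, pow_succ]
  exact ⟨by linarith, by linarith, 1, by push_cast; ring⟩

lemma exists_two_pow_mul_mem_Ico {n : ℕ} {x : ℝ} (hx : 0 < x) (hxn : 2 ^ n * x < 1) :
    ∃ b : ℕ, 2 ^ (n + b + 1) * x ∈ Ico 1 2 := by
  have hex : ∃ m : ℕ, 1 ≤ 2 ^ m * x := by
    obtain ⟨m, hm⟩ := pow_unbounded_of_one_lt x⁻¹ one_lt_two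
    exact ⟨m, by rw [inv_lt_iff_one_lt_mul₀ hx] at hm; linarith⟩
  have hnm : n < Nat.find hex := by
    by_contra! hmn
    have := mul_le_mul_of_nonneg_right (pow_le_pow_right₀ (one_le_two (α := ℝ)) hmn) hx.le
    linarith [Nat.find_spec hex]
  obtain ⟨b, hb⟩ := Nat.exists_eq_add_of_lt hnm
  have hmin := Nat.find_min hex (show n + b < Nat.find hex by omega)
  refine ⟨b, hb ▸ Nat.find_spec hex, ?_⟩
  rw [pow_succ]
  linarith [not_le.mp hmin]

lemma volume_preimage_two_pow_mul_sub_one (a : ℕ) (F : Set ℝ) :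
    volume ((fun x : ℝ => 2 ^ (a + 1) * x - 1) ⁻¹' F) = 2⁻¹ ^ (a + 1) * volume F := by
  have hcomp : (fun x : ℝ => 2 ^ (a + 1) * x - 1) ⁻¹' F
      = (fun x => 2 ^ (a + 1) * x) ⁻¹' ((fun y => y + -1) ⁻¹' F) := by
    ext; simp [sub_eq_add_neg]
  rw [hcomp, Real.volume_preimage_mul_left (by positivity), measure_preimage_add_right,
    abs_of_pos (by positivity), ← inv_pow, ENNReal.ofReal_pow (by norm_num),
    ENNReal.ofReal_inv_of_pos two_pos, ENNReal.ofReal_ofNat]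

lemma volume_Ioc_inter_preimage_tauB_le (n : ℕ) (E : Set ℝ) :
    volume (Ioc 0 ((2 : ℝ)⁻¹ ^ n) ∩ tauB ⁻¹' E) ≤ 2⁻¹ ^ n * volume (Ico 0 1 ∩ E) := by
  set c : ℝ := 2⁻¹ ^ n
  have hcover : Ioc 0 c ∩ tauB ⁻¹' E ⊆
      {c} ∪ ⋃ b : ℕ, (fun x : ℝ => 2 ^ (n + b + 1) * x - 1) ⁻¹' (Ico 0 1 ∩ E) := by
    rintro x ⟨⟨hx0, hxc⟩, hxE⟩
    rcases hxc.eq_or_lt with rfl | hxc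
    · exact Or.inl rfl
    have hxn : 2 ^ n * x < 1 := by
      calc 2 ^ n * x < 2 ^ n * c := by gcongr
        _ = 1 := by rw [← mul_pow, mul_inv_cancel₀ two_ne_zero, one_pow]
    obtain ⟨b, hb⟩ := exists_two_pow_mul_mem_Ico hx0 hxn
    refine Or.inr (mem_iUnion.mpr ⟨b, ?_⟩)
    rw [mem_preimage, ← tauB_eq_of_two_pow_mul_mem_Ico hb]
    exact ⟨tauB_mem_Ico x, hxE⟩
  calc volume (Ioc 0 c ∩ tauB ⁻¹' E)
      ≤ volume {c} + volume (⋃ b : ℕ, (fun x : ℝ => 2 ^ (n + b + 1) * x - 1) ⁻¹' (Ico 0 1 ∩ E)) :=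
        (measure_mono hcover).trans (measure_union_le _ _)
    _ ≤ ∑' b : ℕ, 2⁻¹ ^ (n + b + 1) * volume (Ico 0 1 ∩ E) := by
        rw [measure_singleton, zero_add]
        exact (measure_iUnion_le _).trans_eq
          (tsum_congr fun b => volume_preimage_two_pow_mul_sub_one _ _)
    _ = 2⁻¹ ^ n * volume (Ico 0 1 ∩ E) := by
        simp_rw [add_assoc, pow_add _ n, mul_assoc, ENNReal.tsum_mul_left, ENNReal.tsum_mul_right,
          ENNReal.tsum_geometric_add_one, ENNReal.one_sub_inv_two,
          ENNReal.mul_inv_cancel (by norm_num : (2⁻¹ : ℝ≥0∞) ≠ 0) (by norm_num), one_mul]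

lemma volume_Ico_inter_preimage_tauB_iterate_le (E : Set ℝ) :
    ∀ d : ℕ, volume (Ico 0 1 ∩ tauB^[d] ⁻¹' E) ≤ volume (Ico 0 1 ∩ E)
  | 0 => by simp
  | d + 1 => calc
      volume (Ico 0 1 ∩ tauB^[d + 1] ⁻¹' E)
          = volume (Ioc 0 ((2 : ℝ)⁻¹ ^ 0) ∩ tauB ⁻¹' (tauB^[d] ⁻¹' E)) := by
        rw [pow_zero, Function.iterate_succ, preimage_comp]
        exact measure_congr (Ico_ae_eq_Ioc.inter (ae_eq_refl _))
      _ ≤ volume (Ico 0 1 ∩ tauB^[d] ⁻¹' E) := by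
        simpa using volume_Ioc_inter_preimage_tauB_le 0 (tauB^[d] ⁻¹' E)
      _ ≤ volume (Ico 0 1 ∩ E) := volume_Ico_inter_preimage_tauB_iterate_le E d

lemma volume_Ico_inter_preimage_tauB_iterate_pair_le {n : ℕ} {E : Set ℝ}
    (hE : E ⊆ Ioc 0 ((2 : ℝ)⁻¹ ^ n)) {i j : ℕ} (hij : i < j) :
    volume (Ico 0 1 ∩ tauB^[i] ⁻¹' E ∩ tauB^[j] ⁻¹' E) ≤ 2⁻¹ ^ n * volume (Ico 0 1 ∩ E) := by
  obtain ⟨d, rfl⟩ := Nat.exists_eq_add_of_lt hij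
  have hsplit : tauB^[i + d + 1] ⁻¹' E = tauB^[i] ⁻¹' (tauB ⁻¹' (tauB^[d] ⁻¹' E)) := by
    rw [show i + d + 1 = d + 1 + i by omega, Function.iterate_add, Function.iterate_succ,
      preimage_comp, preimage_comp]
  calc volume (Ico 0 1 ∩ tauB^[i] ⁻¹' E ∩ tauB^[i + d + 1] ⁻¹' E)
      ≤ volume (Ico 0 1 ∩ (E ∩ tauB ⁻¹' (tauB^[d] ⁻¹' E))) := by
        rw [hsplit, inter_assoc, ← preimage_inter]
        exact volume_Ico_inter_preimage_tauB_iterate_le _ i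
    _ ≤ volume (Ioc 0 ((2 : ℝ)⁻¹ ^ n) ∩ tauB ⁻¹' (tauB^[d] ⁻¹' E)) :=
        measure_mono fun x hx => ⟨hE hx.2.1, hx.2.2⟩
    _ ≤ 2⁻¹ ^ n * volume (Ico 0 1 ∩ tauB^[d] ⁻¹' E) := volume_Ioc_inter_preimage_tauB_le n _
    _ ≤ 2⁻¹ ^ n * volume (Ico 0 1 ∩ E) := by
        gcongr 2⁻¹ ^ n * ?_
        exact volume_Ico_inter_preimage_tauB_iterate_le E d

def largeDigitSet (T : ℝ) : Set ℝ := {y | T ≤ (⌊1 / y⌋ : ℝ)}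

lemma largeDigitSet_subset_Ioc {T : ℝ} (hT : 0 < T) : largeDigitSet T ⊆ Ioc 0 T⁻¹ := by
  intro y hy
  have hTy : T ≤ y⁻¹ := by simpa using hy.trans (Int.floor_le (1 / y))
  have hy0 : 0 < y := inv_pos.mp (hT.trans_le hTy)
  exact ⟨hy0, (le_inv_comm₀ hT hy0).mp hTy⟩

lemma volume_Ico_inter_preimage_largeDigitSet_pair_le {T : ℝ} (hT : 1 ≤ T) {i j : ℕ}
    (hij : i < j) :
    volume (Ico 0 1 ∩ tauB^[i] ⁻¹' largeDigitSet T ∩ tauB^[j] ⁻¹' largeDigitSet T) ≤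
      ENNReal.ofReal (2 / T ^ 2) := by
  have hT0 : 0 < T := one_pos.trans_le hT
  set n := Nat.log 2 ⌊T⌋₊
  have hlow : (2 : ℝ) ^ n ≤ T := calc
    (2 : ℝ) ^ n ≤ ⌊T⌋₊ := by exact_mod_cast Nat.pow_log_le_self 2 (Nat.floor_pos.mpr hT).ne'
    _ ≤ T := Nat.floor_le hT0.le
  have hhigh : T / 2 ≤ 2 ^ n := by
    have : ⌊T⌋₊ < 2 ^ (n + 1) := Nat.lt_pow_succ_log_self one_lt_two _
    have : (⌊T⌋₊ : ℝ) + 1 ≤ 2 ^ (n + 1) := by exact_mod_cast this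
    linarith [Nat.lt_floor_add_one T, pow_succ (2 : ℝ) n]
  have hsub : largeDigitSet T ⊆ Ioc 0 ((2 : ℝ)⁻¹ ^ n) := fun y hy =>
    have hy' := largeDigitSet_subset_Ioc hT0 hy
    ⟨hy'.1, hy'.2.trans (by rw [inv_pow]; exact inv_anti₀ (by positivity) hlow)⟩
  calc _ ≤ 2⁻¹ ^ n * volume (Ico 0 1 ∩ largeDigitSet T) :=
        volume_Ico_inter_preimage_tauB_iterate_pair_le hsub hij
    _ ≤ ENNReal.ofReal (2 / T) * ENNReal.ofReal T⁻¹ := by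
        gcongr
        · rw [← ENNReal.ofReal_ofNat 2, ← ENNReal.ofReal_inv_of_pos two_pos,
            ← ENNReal.ofReal_pow (by norm_num), inv_pow, ← inv_div]
          exact ENNReal.ofReal_le_ofReal (inv_anti₀ (by positivity) hhigh)
        · calc volume (Ico 0 1 ∩ largeDigitSet T) ≤ volume (Ioc 0 T⁻¹) :=
                measure_mono (inter_subset_right.trans (largeDigitSet_subset_Ioc hT0))
            _ = ENNReal.ofReal T⁻¹ := by rw [Real.volume_Ioc, sub_zero]
    _ = ENNReal.ofReal (2 / T ^ 2) := by
        rw [← ENNReal.ofReal_mul (by positivity)]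
        congr 1
        field_simp

def largeDigitPairEvent (N : ℕ) (T : ℝ) : Set ℝ :=
  ⋃ j ∈ Finset.range N, ⋃ i ∈ Finset.range j,
    Ico 0 1 ∩ tauB^[i] ⁻¹' largeDigitSet T ∩ tauB^[j] ⁻¹' largeDigitSet T

lemma volume_largeDigitPairEvent_le {T : ℝ} (hT : 1 ≤ T) (N : ℕ) :
    volume (largeDigitPairEvent N T) ≤ ENNReal.ofReal (2 * N ^ 2 / T ^ 2) := by
  have hrow : ∀ j ∈ Finset.range N, ∑ i ∈ Finset.range j,
      volume (Ico 0 1 ∩ tauB^[i] ⁻¹' largeDigitSet T ∩ tauB^[j] ⁻¹' largeDigitSet T) ≤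
        N • ENNReal.ofReal (2 / T ^ 2) := fun j hj => calc
    _ ≤ j • ENNReal.ofReal (2 / T ^ 2) := by
      simpa using Finset.sum_le_card_nsmul _ _ _ fun i hi =>
        volume_Ico_inter_preimage_largeDigitSet_pair_le hT (Finset.mem_range.mp hi)
    _ ≤ N • ENNReal.ofReal (2 / T ^ 2) := nsmul_le_nsmul_left zero_le (Finset.mem_range.mp hj).le
  calc volume (largeDigitPairEvent N T)
      ≤ ∑ j ∈ Finset.range N, ∑ i ∈ Finset.range j,
          volume (Ico 0 1 ∩ tauB^[i] ⁻¹' largeDigitSet T ∩ tauB^[j] ⁻¹' largeDigitSet T) :=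
        (measure_biUnion_finset_le _ _).trans
          (Finset.sum_le_sum fun j _ => measure_biUnion_finset_le _ _)
    _ ≤ N • N • ENNReal.ofReal (2 / T ^ 2) := by simpa using Finset.sum_le_card_nsmul _ _ _ hrow
    _ = ENNReal.ofReal (2 * N ^ 2 / T ^ 2) := by
        rw [nsmul_eq_mul, nsmul_eq_mul, ← ENNReal.ofReal_natCast,
          ← ENNReal.ofReal_mul (by positivity), ← ENNReal.ofReal_mul (by positivity)]
        congr 1
        ring

lemma mem_largeDigitPairEvent {x : ℝ} (hx : x ∈ Ico 0 1) {N : ℕ} {T : ℝ} {i j : ℕ} (hij : i < j)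
    (hjN : j < N) (hi : T ≤ (⌊1 / tauB^[i] x⌋ : ℝ)) (hj : T ≤ (⌊1 / tauB^[j] x⌋ : ℝ)) :
    x ∈ largeDigitPairEvent N T := by
  simp only [largeDigitPairEvent, mem_iUnion, Finset.mem_range]
  exact ⟨j, hjN, i, hij, ⟨hx, hi⟩, hj⟩

noncomputable def threshold (n : ℕ) : ℝ := n * Real.log n ^ ((3 : ℝ) / 4)

lemma threshold_mono {m n : ℕ} (hm : 1 ≤ m) (hmn : m ≤ n) : threshold m ≤ threshold n := by
  have h1 : (1 : ℝ) ≤ m := by exact_mod_cast hm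
  have h2 : (m : ℝ) ≤ n := by exact_mod_cast hmn
  unfold threshold
  gcongr

lemma one_le_threshold_two : 1 ≤ threshold 2 := by
  have hlog : Real.log 2 ≤ Real.log 2 ^ ((3 : ℝ) / 4) := by
    simpa using Real.rpow_le_rpow_of_exponent_ge (Real.log_pos one_lt_two)
      (by linarith [Real.log_two_lt_d9]) (by norm_num : (3 : ℝ) / 4 ≤ 1)
  unfold threshold
  push_cast
  linarith [Real.log_two_gt_d9]

lemma threshold_two_pow_sq (k : ℕ) :
    threshold (2 ^ k) ^ 2 = (2 ^ k) ^ 2 * (k * Real.log 2) ^ ((3 : ℝ) / 2) := by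
  rw [threshold, Nat.cast_pow, Nat.cast_ofNat, Real.log_pow, mul_pow,
    ← Real.rpow_natCast ((k * Real.log 2) ^ ((3 : ℝ) / 4)) 2,
    ← Real.rpow_mul (by positivity)]
  norm_num

lemma summable_eight_div_succ_mul_log_two_rpow :
    Summable fun k : ℕ => 8 / ((k + 1 : ℕ) * Real.log 2) ^ ((3 : ℝ) / 2) := by
  refine (((summable_nat_add_iff 1).mpr (Real.summable_nat_rpow_inv.mpr
    (by norm_num : (1 : ℝ) < 3 / 2))).mul_left (8 / Real.log 2 ^ ((3 : ℝ) / 2))).congr fun k => ?_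
  rw [Real.mul_rpow (by positivity) (Real.log_pos one_lt_two).le]
  field_simp

-- The blocks start at `k + 1` because `t_1 = 0`.
lemma tsum_volume_largeDigitPairEvent_ne_top :
    ∑' k : ℕ, volume (largeDigitPairEvent (2 ^ (k + 2)) (threshold (2 ^ (k + 1)))) ≠ ∞ := by
  refine ne_top_of_le_ne_top (ENNReal.ofReal_ne_top (r := ∑' k : ℕ,
    8 / ((k + 1 : ℕ) * Real.log 2) ^ ((3 : ℝ) / 2))) ?_
  rw [ENNReal.ofReal_tsum_of_nonneg (fun k => by positivity)
    summable_eight_div_succ_mul_log_two_rpow]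
  refine ENNReal.tsum_le_tsum fun k => (volume_largeDigitPairEvent_le ?_ _).trans_eq ?_
  · exact one_le_threshold_two.trans
      (threshold_mono one_le_two (Nat.le_self_pow k.succ_ne_zero 2))
  · congr 1
    rw [threshold_two_pow_sq]
    have : 0 < Real.log 2 := Real.log_pos one_lt_two
    push_cast
    field_simp
    ring

lemma mem_largeDigitPairEvent_of_le {x : ℝ} (hx : x ∈ Ico 0 1) {n i j : ℕ} (hi : 1 ≤ i)
    (hij : i < j) (hjn : j ≤ n) (hTi : threshold n ≤ (⌊1 / tauB^[i - 1] x⌋ : ℝ))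
    (hTj : threshold n ≤ (⌊1 / tauB^[j - 1] x⌋ : ℝ)) :
    x ∈ largeDigitPairEvent (2 ^ (Nat.log 2 n - 1 + 2))
      (threshold (2 ^ (Nat.log 2 n - 1 + 1))) := by
  have hlog : 1 ≤ Nat.log 2 n := Nat.le_log_of_pow_le one_lt_two (by omega)
  have hpow : 2 ^ (Nat.log 2 n - 1 + 1) ≤ n := by
    rw [Nat.sub_add_cancel hlog]; exact Nat.pow_log_le_self 2 (by omega)
  have hT : threshold (2 ^ (Nat.log 2 n - 1 + 1)) ≤ threshold n :=
    threshold_mono Nat.one_le_two_pow hpow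
  refine mem_largeDigitPairEvent hx (by omega : i - 1 < j - 1) ?_ (hT.trans hTi) (hT.trans hTj)
  have := Nat.lt_pow_succ_log_self one_lt_two n
  rw [show Nat.log 2 n - 1 + 2 = Nat.log 2 n + 1 by omega]
  omega

lemma tendsto_log_two_sub_one_atTop : Tendsto (fun n => Nat.log 2 n - 1) atTop atTop :=
  (tendsto_sub_atTop_nat 1).comp <|
    tendsto_atTop_atTop.mpr fun k => ⟨2 ^ k, fun _ hn => Nat.le_log_of_pow_le one_lt_two hn⟩

open Classical in
/-- For the induced digits `β_i = χ ∘ τ_B^{i-1}` and `t_n = n·(log n)^{3/4}`, Lebesgue-almost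
surely only finitely many `n` satisfy `#{i ≤ n : β_i ≥ t_n} ≥ 2`. -/
theorem stmt10 :
    volume {x : ℝ | x ∈ Set.Ico (0 : ℝ) 1 ∧
      {n : ℕ | 2 ≤ ((Finset.Icc 1 n).filter
        (fun i => (n : ℝ) * (Real.log n) ^ ((3 : ℝ) / 4) ≤
          (⌊1 / tauB^[i - 1] x⌋ : ℝ))).card}.Infinite} = 0 := by
  refine measure_mono_null (fun x ⟨hx, hinf⟩ => ?_)
    (measure_limsup_atTop_eq_zero tsum_volume_largeDigitPairEvent_ne_top)
  rw [mem_limsup_iff_frequently_mem]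
  refine tendsto_log_two_sub_one_atTop.frequently_map _ (fun n hn => ?_)
    (Nat.frequently_atTop_iff_infinite.mpr hinf)
  obtain ⟨i, hi, j, hj, hij⟩ := Finset.one_lt_card.mp hn
  simp only [Finset.mem_filter, Finset.mem_Icc] at hi hj
  rcases hij.lt_or_gt with h | h
  · exact mem_largeDigitPairEvent_of_le hx hi.1.1 h hj.1.2 hi.2 hj.2
  · exact mem_largeDigitPairEvent_of_le hx hj.1.1 h hi.1.2 hj.2 hi.2
end

section
/- For every ε > 0 there exist M ∈ ℕ and R > 0 such that for all m ≥ M and r ≥ R, the piecewise constant function w_m^r on [0,1) (taking value z_{min{j,⌊log₂ r⌋-1}, i} = 2^{min{j,⌊log₂ r⌋-1}+m+1}/(2^m - i) - min{j,⌊log₂ r⌋-1} - 1 on J_{j,i}^m) satisfies E(w_m^r) ≥ (2-ε)·log r. -/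
/-!
On the dyadic shell `[2^{-(j+1)}, 2^{-j})` with `j < L = ⌊log₂ r⌋` the cells `J_{j,i}^m` carry
`z_{j,i}`, and `w` integrates over the shell to `2 S_m - (j+1)/2^{j+1}`, where
`S_m = ∑_{i < 2^{m-1}} 1/(2^m - i) = H_{2^m} - H_{2^{m-1}} → log 2`. The corrections
`(j+1)/2^{j+1}` sum to at most `2`, and `w ≥ 0` on `[0, 2^{-L})`, so
`E(w) ≥ 2 L S_m - 2 ≥ 2 L (log 2 - o(1)) - 2`, while `L log 2 > log r - log 2`.
-/

open MeasureTheory Set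
open Filter Topology Real

theorem exists_lt_mem_Ico_succ {α : Type*} [LinearOrder α] (b : ℕ → α) {x : α} {n : ℕ}
    (hn : b n ≤ x) (h0 : x < b 0) : ∃ j < n, x ∈ Ico (b (j + 1)) (b j) := by
  classical
  have hex : ∃ k, b k ≤ x := ⟨n, hn⟩
  obtain ⟨j, hj⟩ : ∃ j, Nat.find hex = j + 1 :=
    Nat.exists_eq_succ_of_ne_zero fun h => (Nat.find_spec hex).not_gt (h ▸ h0)
  refine ⟨j, ?_, ?_, ?_⟩
  · have := Nat.find_min' hex hn
    omega
  · exact hj ▸ Nat.find_spec hex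
  · exact not_le.1 (Nat.find_min hex (by omega))

theorem harmonic_two_mul_sub_harmonic (N : ℕ) :
    (harmonic (2 * N) : ℝ) - harmonic N = ∑ i ∈ Finset.range N, 1 / (2 * N - i : ℝ) := by
  rw [← Finset.sum_range_reflect, two_mul, harmonic, harmonic, Finset.sum_range_add]
  push_cast
  rw [add_sub_cancel_left]
  refine Finset.sum_congr rfl fun i hi => ?_
  rw [Finset.mem_range] at hi
  rw [Nat.cast_sub (by omega), Nat.cast_sub (by omega), one_div]
  push_cast
  ring_nf

theorem tendsto_sum_one_div_two_mul_sub :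
    Tendsto (fun N : ℕ => ∑ i ∈ Finset.range N, 1 / (2 * N - i : ℝ)) atTop
      (𝓝 (log 2)) := by
  have h := (tendsto_harmonic_sub_log.comp (tendsto_id.const_mul_atTop' two_pos)).sub
    tendsto_harmonic_sub_log
  rw [sub_self] at h
  refine (h.add_const (log 2)).congr' ?_ |>.trans (by rw [zero_add])
  filter_upwards [eventually_ne_atTop 0] with N hN
  rw [← harmonic_two_mul_sub_harmonic, Function.comp_apply, id, Nat.cast_mul, Nat.cast_ofNat,
    log_mul two_ne_zero (by exact_mod_cast hN)]
  ring

theorem intervalIntegral.sum_integral_adjacent_intervals_rev {E : Type*} [NormedAddCommGroup E]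
    [NormedSpace ℝ E] {f : ℝ → E} {μ : Measure ℝ} {a : ℕ → ℝ} {n : ℕ}
    (hint : ∀ k < n, IntervalIntegrable f μ (a (k + 1)) (a k)) :
    ∑ k ∈ Finset.range n, ∫ x in a (k + 1)..a k, f x ∂μ =
      ∫ x in a n..a 0, f x ∂μ := by
  rw [intervalIntegral.integral_symm,
    ← intervalIntegral.sum_integral_adjacent_intervals fun k hk => (hint k hk).symm,
    ← Finset.sum_neg_distrib]
  exact Finset.sum_congr rfl fun k _ => intervalIntegral.integral_symm _ _

theorem IntervalIntegrable.of_mem_Icc {E : Type*} [NormedAddCommGroup E] {f : ℝ → E}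
    {μ : Measure ℝ} {a b c d : ℝ} (hf : IntervalIntegrable f μ a b) (hc : c ∈ Icc a b)
    (hd : d ∈ Icc a b) : IntervalIntegrable f μ c d :=
  hf.mono_set (uIcc_subset_uIcc (Icc_subset_uIcc hc) (Icc_subset_uIcc hd))

theorem intervalIntegral.integral_eq_of_eqOn_Ico {E : Type*} [NormedAddCommGroup E]
    [NormedSpace ℝ E] [CompleteSpace E] {f : ℝ → E} {a b : ℝ} {c : E} (hab : a ≤ b)
    (h : EqOn f (fun _ => c) (Ico a b)) : ∫ x in a..b, f x = (b - a) • c := by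
  rw [intervalIntegral.integral_of_le hab, integral_Ioc_eq_integral_Ioo,
    setIntegral_congr_fun measurableSet_Ioo (h.mono Ioo_subset_Ico_self), setIntegral_const,
    Real.volume_real_Ioo_of_le hab]

theorem aemeasurable_restrict_of_subset_iUnion_of_eqOn_const {α β ι : Type*}
    [MeasurableSpace α] [MeasurableSpace β] [Countable ι] {μ : Measure α} {f : α → β}
    {s : Set α} {t : ι → Set α}
    (ht : ∀ i, MeasurableSet (t i)) (hst : s ⊆ ⋃ i, t i) (c : ι → β)
    (hf : ∀ i, EqOn f (fun _ => c i) (t i)) : AEMeasurable f (μ.restrict s) :=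
  (aemeasurable_iUnion_iff.2 fun i => aemeasurable_const.congr
    ((ae_restrict_mem (ht i)).mono fun _ hx => (hf i hx).symm)).mono_set hst

theorem two_pow_div_two_pow_add_succ (n j : ℕ) :
    (2 : ℝ) ^ n / 2 ^ (j + (n + 1)) = 1 / 2 ^ (j + 1) := by
  rw [show j + (n + 1) = j + 1 + n by ring, pow_add]
  field_simp

theorem one_div_two_pow_sub_two_pow_div (n j : ℕ) :
    (1 : ℝ) / 2 ^ j - (2 ^ n : ℕ) / 2 ^ (j + (n + 1)) = 1 / 2 ^ (j + 1) := by
  rw [Nat.cast_pow, Nat.cast_ofNat, two_pow_div_two_pow_add_succ, pow_succ]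
  field_simp
  norm_num

theorem one_div_two_pow_mem_Icc (j : ℕ) : (1 : ℝ) / 2 ^ j ∈ Icc 0 1 :=
  ⟨by positivity, div_le_one_of_le₀ (one_le_pow₀ one_le_two) (by positivity)⟩

/-- The cell `J_{j,i}^m`. -/
def dyadicCell (m j i : ℕ) : Set ℝ :=
  Ico ((1 : ℝ) / 2 ^ j - (i + 1) / 2 ^ (j + m)) ((1 : ℝ) / 2 ^ j - i / 2 ^ (j + m))

section DyadicCells

variable {n : ℕ} {w : ℝ → ℝ} {v : ℕ → ℕ → ℝ}

-- The paper's `m ≥ 1` appears as `n + 1`, so that its `2^{m-1}` is `2 ^ n`.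

theorem one_div_two_pow_sub_div_mem_Icc {j i : ℕ} (hi : i ≤ 2 ^ n) :
    (1 : ℝ) / 2 ^ j - i / 2 ^ (j + (n + 1)) ∈ Icc ((1 : ℝ) / 2 ^ (j + 1)) (1 / 2 ^ j) := by
  rw [← one_div_two_pow_sub_two_pow_div n]
  constructor
  · gcongr
  · exact sub_le_self _ (by positivity)

theorem exists_mem_dyadicCell {x : ℝ} (hx : x ∈ Ioo 0 1) :
    ∃ j, ∃ i < 2 ^ n, x ∈ dyadicCell (n + 1) j i := by
  obtain ⟨N, hN⟩ := exists_pow_lt_of_lt_one hx.1 (by norm_num : (1 / 2 : ℝ) < 1)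
  obtain ⟨j, -, hj⟩ := exists_lt_mem_Ico_succ (fun j => (1 : ℝ) / 2 ^ j) (n := N)
    (by simpa using hN.le) (by simpa using hx.2)
  obtain ⟨i, hi, hxi⟩ := exists_lt_mem_Ico_succ
    (fun i => (1 : ℝ) / 2 ^ j - i / 2 ^ (j + (n + 1))) (n := 2 ^ n)
    (one_div_two_pow_sub_two_pow_div n j ▸ hj.1) (by simpa using hj.2)
  exact ⟨j, i, hi, by simpa only [dyadicCell, Nat.cast_add, Nat.cast_one] using hxi⟩

theorem exists_eq_of_mem_Ioo
    (hw : ∀ j, ∀ i < 2 ^ n, ∀ x ∈ dyadicCell (n + 1) j i, w x = v j i) {x : ℝ}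
    (hx : x ∈ Ioo 0 1) : ∃ j, ∃ i < 2 ^ n, w x = v j i := by
  obtain ⟨j, i, hi, hxi⟩ := exists_mem_dyadicCell hx
  exact ⟨j, i, hi, hw j i hi x hxi⟩

theorem intervalIntegrable_zero_one_of_dyadicCell {C : ℝ}
    (hv : ∀ j, ∀ i < 2 ^ n, |v j i| ≤ C)
    (hw : ∀ j, ∀ i < 2 ^ n, ∀ x ∈ dyadicCell (n + 1) j i, w x = v j i) :
    IntervalIntegrable w volume 0 1 := by
  rw [intervalIntegrable_iff_integrableOn_Ioc_of_le zero_le_one,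
    integrableOn_Ioc_iff_integrableOn_Ioo]
  refine ⟨?_, .restrict_of_bounded C measure_Ioo_lt_top ?_⟩
  · refine (aemeasurable_restrict_of_subset_iUnion_of_eqOn_const
      (t := fun p : ℕ × Fin (2 ^ n) => dyadicCell (n + 1) p.1 p.2) (fun _ => measurableSet_Ico)
      (fun x hx => ?_) (fun p => v p.1 p.2)
      (fun p x hx => hw _ _ p.2.isLt x hx)).aestronglyMeasurable
    obtain ⟨j, i, hi, hxi⟩ := exists_mem_dyadicCell hx
    exact mem_iUnion.2 ⟨(j, ⟨i, hi⟩), hxi⟩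
  · filter_upwards [ae_restrict_mem measurableSet_Ioo] with x hx
    obtain ⟨j, i, hi, hwx⟩ := exists_eq_of_mem_Ioo hw hx
    rw [Real.norm_eq_abs, hwx]
    exact hv j i hi

theorem integral_one_div_two_pow_succ_one_div_two_pow (hint : IntervalIntegrable w volume 0 1)
    (hw : ∀ j, ∀ i < 2 ^ n, ∀ x ∈ dyadicCell (n + 1) j i, w x = v j i) (j : ℕ) :
    ∫ x in (1 : ℝ) / 2 ^ (j + 1)..1 / 2 ^ j, w x =
      ∑ i ∈ Finset.range (2 ^ n), v j i / 2 ^ (j + (n + 1)) := by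
  let p : ℕ → ℝ := fun i => 1 / 2 ^ j - i / 2 ^ (j + (n + 1))
  have hp : (1 : ℝ) / 2 ^ (j + 1) = p (2 ^ n) ∧ (1 : ℝ) / 2 ^ j = p 0 :=
    ⟨(one_div_two_pow_sub_two_pow_div n j).symm, by simp [p]⟩
  rw [hp.1, hp.2, ← intervalIntegral.sum_integral_adjacent_intervals_rev]
  · refine Finset.sum_congr rfl fun i hi => ?_
    have hle : p (i + 1) ≤ p i := by
      simp only [p]
      gcongr
      exact_mod_cast i.le_succ
    rw [intervalIntegral.integral_eq_of_eqOn_Ico hle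
      (fun x hx => hw j i (Finset.mem_range.1 hi) x (by simpa [dyadicCell, p] using hx)),
      smul_eq_mul]
    simp only [p]
    push_cast
    ring
  · intro i hi
    have hmem : ∀ k ≤ 2 ^ n, p k ∈ Icc 0 1 := fun k hk =>
      ⟨(one_div_two_pow_mem_Icc _).1.trans (one_div_two_pow_sub_div_mem_Icc hk).1,
        (one_div_two_pow_sub_div_mem_Icc hk).2.trans (one_div_two_pow_mem_Icc _).2⟩
    exact hint.of_mem_Icc (hmem _ hi) (hmem _ hi.le)

theorem integral_zero_one_div_two_pow_nonneg (hv : ∀ j, ∀ i < 2 ^ n, 0 ≤ v j i)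
    (hw : ∀ j, ∀ i < 2 ^ n, ∀ x ∈ dyadicCell (n + 1) j i, w x = v j i) (L : ℕ) :
    0 ≤ ∫ x in (0 : ℝ)..1 / 2 ^ L, w x := by
  refine intervalIntegral.integral_nonneg_of_ae_restrict (one_div_two_pow_mem_Icc L).1 ?_
  have hIoo : ∀ᵐ x ∂volume.restrict (Icc (0 : ℝ) (1 / 2 ^ L)), x ∈ Ioo (0 : ℝ) 1 := by
    refine ae_restrict_of_ae_restrict_of_subset (Icc_subset_Icc le_rfl
      (one_div_two_pow_mem_Icc L).2) ?_
    rw [Measure.restrict_congr_set Ioo_ae_eq_Icc.symm]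
    exact ae_restrict_mem measurableSet_Ioo
  filter_upwards [hIoo] with x hx
  obtain ⟨j, i, hi, hwx⟩ := exists_eq_of_mem_Ioo hw hx
  rw [Pi.zero_apply, hwx]
  exact hv j i hi

theorem sum_le_integral_zero_one {C : ℝ} (hv₀ : ∀ j, ∀ i < 2 ^ n, 0 ≤ v j i)
    (hvC : ∀ j, ∀ i < 2 ^ n, v j i ≤ C)
    (hw : ∀ j, ∀ i < 2 ^ n, ∀ x ∈ dyadicCell (n + 1) j i, w x = v j i) (L : ℕ) :
    ∑ j ∈ Finset.range L, ∑ i ∈ Finset.range (2 ^ n), v j i / 2 ^ (j + (n + 1)) ≤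
      ∫ x in (0 : ℝ)..1, w x := by
  have hint : IntervalIntegrable w volume 0 1 :=
    intervalIntegrable_zero_one_of_dyadicCell
      (fun j i hi => (abs_of_nonneg (hv₀ j i hi)).trans_le (hvC j i hi)) hw
  have hshells : ∫ x in (1 : ℝ) / 2 ^ L..1, w x =
      ∑ j ∈ Finset.range L, ∫ x in (1 : ℝ) / 2 ^ (j + 1)..1 / 2 ^ j, w x := by
    rw [intervalIntegral.sum_integral_adjacent_intervals_rev (a := fun j => (1 : ℝ) / 2 ^ j)
      fun j _ => hint.of_mem_Icc (one_div_two_pow_mem_Icc _) (one_div_two_pow_mem_Icc _)]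
    simp
  rw [← intervalIntegral.integral_add_adjacent_intervals
    (hint.of_mem_Icc (left_mem_Icc.2 zero_le_one) (one_div_two_pow_mem_Icc L))
    (hint.of_mem_Icc (one_div_two_pow_mem_Icc L) (right_mem_Icc.2 zero_le_one)), hshells]
  simp_rw [integral_one_div_two_pow_succ_one_div_two_pow hint hw]
  linarith [integral_zero_one_div_two_pow_nonneg hv₀ hw L]

end DyadicCells

theorem sum_range_succ_div_two_pow_succ (L : ℕ) :
    ∑ j ∈ Finset.range L, ((j : ℝ) + 1) / 2 ^ (j + 1) = 2 - (L + 2) / 2 ^ L := by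
  induction L with
  | zero => norm_num
  | succ L ih =>
    rw [Finset.sum_range_succ, ih]
    push_cast
    field_simp
    ring

noncomputable def dyadicHarmonicSum (n : ℕ) : ℝ :=
  ∑ i ∈ Finset.range (2 ^ n), 1 / (2 * 2 ^ n - i : ℝ)

theorem tendsto_dyadicHarmonicSum : Tendsto dyadicHarmonicSum atTop (𝓝 (log 2)) := by
  refine (tendsto_sum_one_div_two_mul_sub.comp
    (tendsto_pow_atTop_atTop_of_one_lt (α := ℕ) one_lt_two)).congr fun n => ?_
  simp [dyadicHarmonicSum]

/-- The paper's `z_{j,i}` (for the given `m`). -/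
noncomputable def cellValue (m j i : ℕ) : ℝ := 2 ^ (j + m + 1) / ((2 : ℝ) ^ m - i) - j - 1

section CellValue

variable {n j i : ℕ}

theorem cellValue_bounds (hi : i < 2 ^ n) :
    0 ≤ cellValue (n + 1) j i ∧ cellValue (n + 1) j i ≤ 2 ^ (j + 2) := by
  have hi' : (i : ℝ) < 2 ^ n := by exact_mod_cast hi
  have hd : (2 : ℝ) ^ n < 2 ^ (n + 1) - i := by rw [pow_succ]; linarith
  have hd' : (2 : ℝ) ^ (n + 1) - i ≤ 2 ^ (n + 1) := sub_le_self _ (Nat.cast_nonneg i)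
  have hpos : (0 : ℝ) < 2 ^ n := by positivity
  have hj : (j : ℝ) + 1 ≤ 2 ^ (j + 1) := by exact_mod_cast (Nat.lt_two_pow_self (n := j + 1)).le
  have hlow : (2 : ℝ) ^ (j + 1) ≤ 2 ^ (j + (n + 1) + 1) / (2 ^ (n + 1) - i) := by
    rw [le_div_iff₀ (hpos.trans hd), show j + (n + 1) + 1 = j + 1 + (n + 1) by ring,
      pow_add 2 (j + 1)]
    exact mul_le_mul_of_nonneg_left hd' (by positivity)
  have hupp : (2 : ℝ) ^ (j + (n + 1) + 1) / (2 ^ (n + 1) - i) ≤ 2 ^ (j + 2) := by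
    rw [div_le_iff₀ (hpos.trans hd), show j + (n + 1) + 1 = j + 2 + n by ring,
      pow_add 2 (j + 2)]
    gcongr
  unfold cellValue
  constructor <;> linarith [(Nat.cast_nonneg j : (0 : ℝ) ≤ j)]

theorem sum_cellValue_div_two_pow (n j : ℕ) :
    ∑ i ∈ Finset.range (2 ^ n), cellValue (n + 1) j i / 2 ^ (j + (n + 1)) =
      2 * dyadicHarmonicSum n - (j + 1) / 2 ^ (j + 1) := by
  have hterm : ∀ i : ℕ, cellValue (n + 1) j i / 2 ^ (j + (n + 1)) =
      2 * (1 / (2 * 2 ^ n - i : ℝ)) - (j + 1) / 2 ^ (j + (n + 1)) := by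
    intro i
    rw [cellValue, pow_succ' 2 (j + (n + 1)), pow_succ' 2 n]
    field_simp
    ring
  simp_rw [hterm]
  rw [Finset.sum_sub_distrib, ← Finset.mul_sum, Finset.sum_const, Finset.card_range, nsmul_eq_mul,
    Nat.cast_pow, Nat.cast_ofNat, ← mul_div_assoc, mul_div_right_comm,
    two_pow_div_two_pow_add_succ, dyadicHarmonicSum]
  ring

theorem two_mul_dyadicHarmonicSum_sub_two_le_integral {w : ℝ → ℝ} (n k : ℕ)
    (hw : ∀ j, ∀ i < 2 ^ n, ∀ x ∈ dyadicCell (n + 1) j i,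
      w x = cellValue (n + 1) (min j k) i) :
    2 * (k + 1) * dyadicHarmonicSum n - 2 ≤ ∫ x in Ico (0 : ℝ) 1, w x := by
  rw [integral_Ico_eq_integral_Ioo, ← integral_Ioc_eq_integral_Ioo,
    ← intervalIntegral.integral_of_le zero_le_one]
  refine le_trans ?_ (sum_le_integral_zero_one (v := fun j i => cellValue (n + 1) (min j k) i)
    (fun j i hi => (cellValue_bounds hi).1)
    (fun j i hi => (cellValue_bounds hi).2.trans
      (pow_le_pow_right₀ one_le_two (by omega : min j k + 2 ≤ k + 2))) hw (k + 1))
  calc 2 * (k + 1) * dyadicHarmonicSum n - 2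
      ≤ ∑ j ∈ Finset.range (k + 1), (2 * dyadicHarmonicSum n - (j + 1) / 2 ^ (j + 1)) := by
        rw [Finset.sum_sub_distrib, Finset.sum_const, Finset.card_range, nsmul_eq_mul,
          sum_range_succ_div_two_pow_succ]
        have : (0 : ℝ) ≤ ((k + 1 : ℕ) + 2) / 2 ^ (k + 1) := by positivity
        push_cast at this ⊢
        linarith
    _ = _ := Finset.sum_congr rfl fun j hj => by
        rw [min_eq_left (Nat.lt_succ_iff.1 (Finset.mem_range.1 hj)), sum_cellValue_div_two_pow]

end CellValue

theorem natLog_floor_mul_log_le {b : ℕ} (hb : 1 < b) {r : ℝ} (hr : 1 ≤ r) :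
    Nat.log b ⌊r⌋₊ * log b ≤ log r ∧ log r < (Nat.log b ⌊r⌋₊ + 1) * log b := by
  have hb' : (0 : ℝ) < b := by positivity
  have hr' : 0 < r := zero_lt_one.trans_le hr
  have hlo := Int.zpow_log_le_self hb hr'
  have hhi := Int.lt_zpow_succ_log_self hb r
  rw [Int.log_of_one_le_right b hr, zpow_natCast] at hlo
  rw [Int.log_of_one_le_right b hr, ← Nat.cast_succ, zpow_natCast] at hhi
  rw [← log_pow, ← Nat.cast_succ, ← log_pow]
  exact ⟨log_le_log (pow_pos hb' _) hlo, log_lt_log hr' hhi⟩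

theorem two_sub_mul_le_two_mul_mul_sub_two {ε ℓ L S : ℝ} (hε : 0 < ε) (hℓ : 8 ≤ ε * ℓ)
    (hL : 0 ≤ L) (hlo : L * log 2 ≤ ℓ) (hhi : ℓ < (L + 1) * log 2)
    (hS : log 2 - ε / 8 ≤ S) :
    (2 - ε) * ℓ ≤ 2 * L * S - 2 := by
  have hlog2 := log_two_gt_d9
  have hlog2' := log_two_lt_d9
  have h1 : L * (log 2 - ε / 8) ≤ L * S := mul_le_mul_of_nonneg_left hS hL
  have h2 : L * (1 / 2) ≤ L * log 2 := mul_le_mul_of_nonneg_left (by linarith) hL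
  have h3 : ε * L ≤ ε * (2 * ℓ) := mul_le_mul_of_nonneg_left (by linarith) hε.le
  linarith

/-- For every `ε > 0` there exist `M ∈ ℕ` and `R > 0` such that for all `m ≥ M` and `r ≥ R`:
any function `w` on `[0,1)` taking the value
`z_{min{j,⌊log₂ r⌋-1}, i} = 2^{min{j,⌊log₂ r⌋-1}+m+1}/(2^m - i) - min{j,⌊log₂ r⌋-1} - 1` on
`J_{j,i}^m = [1/2^j - (i+1)/2^{j+m}, 1/2^j - i/2^{j+m})` satisfies
`E(w) ≥ (2-ε)·log r`. -/
theorem stmt14 (ε : ℝ) (hε : 0 < ε) :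
    ∃ M : ℕ, ∃ R : ℝ, 0 < R ∧ ∀ m : ℕ, M ≤ m → ∀ r : ℝ, R ≤ r → ∀ w : ℝ → ℝ,
      (∀ j : ℕ, ∀ i : ℕ, i < 2 ^ (m - 1) →
        ∀ x ∈ Set.Ico ((1 : ℝ) / 2 ^ j - (i + 1) / 2 ^ (j + m))
            ((1 : ℝ) / 2 ^ j - i / 2 ^ (j + m)),
          w x = 2 ^ (min j (Nat.log 2 ⌊r⌋₊ - 1) + m + 1) / ((2 : ℝ) ^ m - i) -
            (min j (Nat.log 2 ⌊r⌋₊ - 1) : ℝ) - 1) →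
      (2 - ε) * Real.log r ≤ ∫ x in Set.Ico (0 : ℝ) 1, w x := by
  obtain ⟨n₀, hn₀⟩ := eventually_atTop.1 <| tendsto_dyadicHarmonicSum.eventually
    (lt_mem_nhds (show log 2 - ε / 8 < log 2 by linarith))
  refine ⟨n₀ + 1, max 2 (exp (8 / ε)), by positivity, fun m hm r hr w hw => ?_⟩
  obtain ⟨n, rfl⟩ : ∃ n, m = n + 1 := ⟨m - 1, by omega⟩
  have hr2 : 2 ≤ r := (le_max_left _ _).trans hr
  obtain ⟨k, hk⟩ : ∃ k, Nat.log 2 ⌊r⌋₊ = k + 1 := Nat.exists_eq_succ_of_ne_zero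
    (Nat.log_pos one_lt_two (Nat.le_floor (by exact_mod_cast hr2))).ne'
  have hw' : ∀ j, ∀ i < 2 ^ n, ∀ x ∈ dyadicCell (n + 1) j i,
      w x = cellValue (n + 1) (min j k) i := by
    intro j i hi x hx
    rw [hw j i (by simpa using hi) x hx, cellValue, hk]
    push_cast
    ring_nf
  obtain ⟨hlo, hhi⟩ := natLog_floor_mul_log_le one_lt_two (one_le_two.trans hr2)
  rw [hk] at hlo hhi
  push_cast at hlo hhi
  have hεℓ : 8 ≤ ε * log r := by
    have := mul_le_mul_of_nonneg_left
      ((le_log_iff_exp_le (by linarith)).2 ((le_max_right _ _).trans hr)) hε.le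
    rwa [mul_div_cancel₀ _ hε.ne'] at this
  exact (two_sub_mul_le_two_mul_mul_sub_two hε hεℓ (by positivity) hlo hhi
    (hn₀ n (by omega)).le).trans (two_mul_dyadicHarmonicSum_sub_two_le_integral n k hw')
end
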